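/- Under the Basic Assumption, suppose there is a compact set B ⊂ ℝ^{n+m+q+2} such that for each ν there exists an optimal solution of (P)^ν in B. If θ^ν·|τ^ν − τ| → 0 and σ^ν, θ^ν → ∞, then liminf_{ν→∞} 𝔪^ν ≥ 𝔪; moreover, if liminf_{ν→∞} 𝔪^ν is finite, then the sequence {𝔪^ν} converges to a real number. -/

import Mathlib

open Filter Topology Metric Set

attribute [local instance] Classical.propDecidable

noncomputable section

/-- `ℝ^n` with the Euclidean norm. -/
abbrev Rn (n : ℕ) : Type := EuclideanSpace ℝ (Fin n)

variable {n m : ℕ} {Q : Type*} [NormedAddCommGroup Q]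

/-- `(x, y)` is feasible in the bilevel problem (P): `x ∈ X` and
`y ∈ τ-argmin_{z ∈ Y} { g(x,z) | H(x,z) ∈ D }`. -/
def PFeas (X : Set (Rn n)) (Y : Set (Rn m)) (D : Set Q)
    (g : Rn n × Rn m → ℝ) (H : Rn n × Rn m → Q) (τ : ℝ)
    (x : Rn n) (y : Rn m) : Prop :=
  x ∈ X ∧ y ∈ Y ∧ H (x, y) ∈ D ∧
    ∀ z ∈ Y, H (x, z) ∈ D → g (x, y) ≤ g (x, z) + τ

/-- The minimum value `𝔪` of (P). -/
def PVal (X : Set (Rn n)) (Y : Set (Rn m)) (D : Set Q)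
    (f : Rn n × Rn m → EReal) (g : Rn n × Rn m → ℝ) (H : Rn n × Rn m → Q)
    (τ : ℝ) : EReal :=
  ⨅ (x : Rn n) (y : Rn m) (_ : PFeas X Y D g H τ x y), f (x, y)

/-- Optimal solution of (P): feasible, finite objective value attaining `𝔪`. -/
def POpt (X : Set (Rn n)) (Y : Set (Rn m)) (D : Set Q)
    (f : Rn n × Rn m → EReal) (g : Rn n × Rn m → ℝ) (H : Rn n × Rn m → Q)
    (τ : ℝ) (x : Rn n) (y : Rn m) : Prop :=
  PFeas X Y D g H τ x y ∧ f (x, y) ≠ ⊤ ∧ f (x, y) = PVal X Y D f g H τ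

/-- Feasibility in the alternative problem (P)^ν with data `Yn, gn, Hn, lamBar, τn`. -/
def PnuFeas (X : Set (Rn n)) (Y : Set (Rn m)) (D : Set Q) (Yn : Set (Rn m))
    (gn : Rn n × Rn m → ℝ) (Hn : Rn n × Rn m → Q) (lamBar τn : ℝ)
    (x : Rn n) (y : Rn m) (u : Q) (α lam : ℝ) : Prop :=
  x ∈ X ∧ y ∈ Y ∧ α ≤ 0 ∧ 0 ≤ lam ∧ lam ≤ lamBar ∧ Hn (x, y) + u ∈ D ∧
    ∀ z ∈ Yn, gn (x, y) + α ≤ gn (x, z) + lam * infDist (Hn (x, z)) D + τn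

/-- Objective function of (P)^ν: `f^ν(x,y) + σ^ν ‖u‖ - θ^ν α`. -/
def PnuObj (fn : Rn n × Rn m → EReal) (σn θn : ℝ)
    (x : Rn n) (y : Rn m) (u : Q) (α : ℝ) : EReal :=
  fn (x, y) + ((σn * ‖u‖ - θn * α : ℝ) : EReal)

/-- The minimum value `𝔪^ν` of (P)^ν. -/
def PnuVal (X : Set (Rn n)) (Y : Set (Rn m)) (D : Set Q) (Yn : Set (Rn m))
    (fn : Rn n × Rn m → EReal) (gn : Rn n × Rn m → ℝ) (Hn : Rn n × Rn m → Q)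
    (σn θn lamBar τn : ℝ) : EReal :=
  ⨅ (x : Rn n) (y : Rn m) (u : Q) (α : ℝ) (lam : ℝ)
    (_ : PnuFeas X Y D Yn gn Hn lamBar τn x y u α lam),
    PnuObj fn σn θn x y u α

/-- `ε`-optimal solution of (P)^ν: feasible with finite objective value at most `𝔪^ν + ε`. -/
def PnuEps (X : Set (Rn n)) (Y : Set (Rn m)) (D : Set Q) (Yn : Set (Rn m))
    (fn : Rn n × Rn m → EReal) (gn : Rn n × Rn m → ℝ) (Hn : Rn n × Rn m → Q)
    (σn θn lamBar τn ε : ℝ)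
    (x : Rn n) (y : Rn m) (u : Q) (α lam : ℝ) : Prop :=
  PnuFeas X Y D Yn gn Hn lamBar τn x y u α lam ∧
    PnuObj fn σn θn x y u α ≠ ⊤ ∧
    PnuObj fn σn θn x y u α ≤ PnuVal X Y D Yn fn gn Hn σn θn lamBar τn + (ε : EReal)

/-- The value function `V(x,u) = inf_{y ∈ Y} { g(x,y) | H(x,y) + u ∈ D }`. -/
def Vfun (Y : Set (Rn m)) (D : Set Q)
    (g : Rn n × Rn m → ℝ) (H : Rn n × Rn m → Q)
    (x : Rn n) (u : Q) : EReal :=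
  ⨅ (y : Rn m) (_ : y ∈ Y ∧ H (x, y) + u ∈ D), (g (x, y) : EReal)

/-- The value function `V` is calm at `x` with penalty threshold `lam`. -/
def CalmAtWith (Y : Set (Rn m)) (D : Set Q)
    (g : Rn n × Rn m → ℝ) (H : Rn n × Rn m → Q)
    (x : Rn n) (lam : ℝ) : Prop :=
  0 ≤ lam ∧ ∀ u : Q,
    Vfun Y D g H x 0 - ((lam * ‖u‖ : ℝ) : EReal) ≤ Vfun Y D g H x u

/-- The value function `V` is calm at `x`. -/
def CalmAt (Y : Set (Rn m)) (D : Set Q)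
    (g : Rn n × Rn m → ℝ) (H : Rn n × Rn m → Q) (x : Rn n) : Prop :=
  ∃ lam : ℝ, CalmAtWith Y D g H x lam

/-- The value function `V` is locally calm at `xbar`. -/
def LocallyCalmAt (Y : Set (Rn m)) (D : Set Q)
    (g : Rn n × Rn m → ℝ) (H : Rn n × Rn m → Q) (xbar : Rn n) : Prop :=
  ∃ lam ρ : ℝ, 0 ≤ lam ∧ 0 < ρ ∧
    ∀ x ∈ Metric.closedBall xbar ρ, ∀ u : Q,
      Vfun Y D g H x 0 - ((lam * ‖u‖ : ℝ) : EReal) ≤ Vfun Y D g H x u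

/-- The penalty-based value function `μ(x,λ) = inf_{y ∈ S} [g(x,y) + λ dist(H(x,y), D)]`. -/
def muSet (S : Set (Rn m)) (D : Set Q)
    (g : Rn n × Rn m → ℝ) (H : Rn n × Rn m → Q)
    (x : Rn n) (lam : ℝ) : EReal :=
  ⨅ (y : Rn m) (_ : y ∈ S), ((g (x, y) + lam * infDist (H (x, y)) D : ℝ) : EReal)

/-- The Basic Assumption (Assumption 2.1). -/
structure BasicAssumption (X : Set (Rn n)) (Y : Set (Rn m)) (D : Set Q)
    (Yν : ℕ → Set (Rn m))
    (f : Rn n × Rn m → EReal) (fν : ℕ → Rn n × Rn m → EReal)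
    (g : Rn n × Rn m → ℝ) (gν : ℕ → Rn n × Rn m → ℝ)
    (H : Rn n × Rn m → Q) (Hν : ℕ → Rn n × Rn m → Q)
    (σ θ lamBar τν δ η : ℕ → ℝ) : Prop where
  X_nonempty : X.Nonempty
  X_closed : IsClosed X
  Y_nonempty : Y.Nonempty
  Y_closed : IsClosed Y
  D_nonempty : D.Nonempty
  D_closed : IsClosed D
  Yν_nonempty : ∀ ν, (Yν ν).Nonempty
  Yν_subset : ∀ ν, Yν ν ⊆ Y
  Yν_conv : ∀ y : Rn m,
    Tendsto (fun ν => infDist y (Yν ν)) atTop (𝓝 (infDist y Y))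
  δ_lim : Tendsto δ atTop (𝓝 0)
  g_err : ∀ ν, ∀ x ∈ X, ∀ y ∈ Y, |gν ν (x, y) - g (x, y)| ≤ δ ν
  g_cont : ContinuousOn g (X ×ˢ Y)
  η_lim : Tendsto η atTop (𝓝 0)
  H_err : ∀ ν, ∀ x ∈ X, ∀ y ∈ Y,
    |infDist (Hν ν (x, y)) D - infDist (H (x, y)) D| ≤ η ν
  H_cont : ContinuousOn H (X ×ˢ Y)
  f_ne_bot : ∀ p, f p ≠ ⊥
  fν_ne_bot : ∀ ν p, fν ν p ≠ ⊥
  f_limsup : ∀ x ∈ X, ∀ y ∈ Y,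
    limsup (fun ν => fν ν (x, y)) atTop ≤ f (x, y)
  f_liminf : ∀ x ∈ X, ∀ y ∈ Y, ∀ (xs : ℕ → Rn n) (ys : ℕ → Rn m),
    (∀ ν, xs ν ∈ X) → (∀ ν, ys ν ∈ Y) →
    Tendsto xs atTop (𝓝 x) → Tendsto ys atTop (𝓝 y) →
    f (x, y) ≤ liminf (fun ν => fν ν (xs ν, ys ν)) atTop
  σ_nonneg : ∀ ν, 0 ≤ σ ν
  θ_nonneg : ∀ ν, 0 ≤ θ ν
  lamBar_nonneg : ∀ ν, 0 ≤ lamBar ν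
  τν_nonneg : ∀ ν, 0 ≤ τν ν
  lamBar_top : Tendsto lamBar atTop atTop
  ση_lim : Tendsto (fun ν => σ ν * η ν) atTop (𝓝 0)
  θlamη_lim : Tendsto (fun ν => θ ν * lamBar ν * η ν) atTop (𝓝 0)
  θδ_lim : Tendsto (fun ν => θ ν * δ ν) atTop (𝓝 0)


/-! Take optimal solutions of (P)^ν in the compact set `B`, pass to a subsequence realizing
`liminf 𝔪^ν`, and then to a convergent one. If that liminf is finite, the exact penalties
`σ^ν ‖u‖` and `-θ^ν α` stay bounded while `σ^ν, θ^ν → ∞`, so the limit has `u = 0` and `α = 0`;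
passing to the limit in the constraints of (P)^ν shows that the limit point `(x̄, ȳ)` satisfies
the exact-penalty lower-level inequality with multiplier `λ* = lim λ`, hence is feasible for (P),
and by the liminf part of epi-convergence `𝔪 ≤ f(x̄, ȳ) ≤ liminf 𝔪^ν`.

Conversely, `(x̄, ȳ)` together with the projection correction `u^ν` of `H^ν(x̄, ȳ)` onto `D`,
the multiplier `λ*` (admissible once `λ* ≤ λ̄^ν`) and a slack `α^ν` absorbing the approximation
errors is feasible for (P)^ν, at a cost that vanishes by the rate conditions; the limsup part of
epi-convergence then gives `limsup 𝔪^ν ≤ f(x̄, ȳ) ≤ liminf 𝔪^ν`. -/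

theorem Function.extend_apply_mem {α β γ : Type*} {f : α → β} {g : α → γ} {e' : β → γ}
    {s : Set γ} (hg : ∀ a, g a ∈ s) (he : ∀ b, e' b ∈ s) (b : β) :
    Function.extend f g e' b ∈ s := by
  rw [Function.extend_def]
  split_ifs
  exacts [hg _, he b]

theorem tendsto_extend_of_strictMono {E : Type*} [TopologicalSpace E] {ρ : ℕ → ℕ}
    (hρ : StrictMono ρ) {w : ℕ → E} {b : E} (hw : Tendsto w atTop (𝓝 b)) :
    Tendsto (Function.extend ρ w fun _ => b) atTop (𝓝 b) := by
  intro s hs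
  obtain ⟨K, hK⟩ := mem_atTop_sets.mp (hw hs)
  refine mem_atTop_sets.mpr ⟨ρ K, fun ν hν => ?_⟩
  by_cases h : ∃ k, ρ k = ν
  · obtain ⟨k, rfl⟩ := h
    simpa [hρ.injective.extend_apply] using hK k (hρ.le_iff_le.mp hν)
  · simpa [Function.extend_apply' _ _ _ h] using mem_of_mem_nhds hs

theorem ContinuousOn.tendsto_comp_prodMk {α β γ ι : Type*} [TopologicalSpace α]
    [TopologicalSpace β] [TopologicalSpace γ] {F : α × β → γ} {s : Set α} {t : Set β}
    (hF : ContinuousOn F (s ×ˢ t)) {l : Filter ι} {x : ι → α} {y : ι → β} {a : α} {b : β}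
    (hx : ∀ i, x i ∈ s) (hy : ∀ i, y i ∈ t) (ha : a ∈ s) (hb : b ∈ t)
    (hxa : Tendsto x l (𝓝 a)) (hyb : Tendsto y l (𝓝 b)) :
    Tendsto (fun i => F (x i, y i)) l (𝓝 (F (a, b))) :=
  (hF _ ⟨ha, hb⟩).tendsto.comp
    (tendsto_nhdsWithin_iff.2 ⟨hxa.prodMk_nhds hyb, Eventually.of_forall fun i => ⟨hx i, hy i⟩⟩)

theorem nonpos_of_tendsto_of_eventually_mul_le {ι : Type*} {l : Filter ι} [l.NeBot]
    {a b : ι → ℝ} {b₀ C : ℝ} (ha : Tendsto a l atTop) (hb : Tendsto b l (𝓝 b₀))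
    (hC : ∀ᶠ i in l, a i * b i ≤ C) : b₀ ≤ 0 := by
  by_contra! h
  obtain ⟨i, hgt, hle⟩ := (((ha.atTop_mul_pos h hb).eventually_gt_atTop C).and hC).exists
  linarith

theorem eq_zero_of_tendsto_of_eventually_penalty_le {ι E : Type*} [NormedAddCommGroup E]
    {l : Filter ι} [l.NeBot] {σ θ a : ι → ℝ} {u : ι → E} {u₀ : E} {a₀ C : ℝ}
    (hσ : Tendsto σ l atTop) (hθ : Tendsto θ l atTop) (hσ0 : ∀ i, 0 ≤ σ i)
    (hθ0 : ∀ i, 0 ≤ θ i) (ha0 : ∀ i, a i ≤ 0) (hu : Tendsto u l (𝓝 u₀))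
    (ha : Tendsto a l (𝓝 a₀)) (hC : ∀ᶠ i in l, σ i * ‖u i‖ - θ i * a i ≤ C) :
    u₀ = 0 ∧ a₀ = 0 := by
  have hσu : ∀ i, 0 ≤ σ i * ‖u i‖ := fun i => mul_nonneg (hσ0 i) (norm_nonneg _)
  have hθa : ∀ i, θ i * a i ≤ 0 := fun i => mul_nonpos_of_nonneg_of_nonpos (hθ0 i) (ha0 i)
  refine ⟨norm_le_zero_iff.1 <| nonpos_of_tendsto_of_eventually_mul_le (C := C) hσ hu.norm <|
      hC.mono fun i hi => by linarith [hθa i], le_antisymm (le_of_tendsto' ha ha0) ?_⟩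
  refine neg_nonpos.1 <| nonpos_of_tendsto_of_eventually_mul_le (C := C) hθ ha.neg <|
    hC.mono fun i hi => ?_
  linarith [hσu i, mul_neg (θ i) (a i)]

theorem tendsto_of_mul_abs_sub_tendsto_zero {ι : Type*} {l : Filter ι} {θ a : ι → ℝ} {a₀ : ℝ}
    (hθ : Tendsto θ l atTop) (h : Tendsto (fun i => θ i * |a i - a₀|) l (𝓝 0)) :
    Tendsto a l (𝓝 a₀) := by
  rw [tendsto_iff_dist_tendsto_zero]
  refine squeeze_zero' (Eventually.of_forall fun i => dist_nonneg) ?_ h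
  filter_upwards [hθ.eventually_ge_atTop 1] with i hi
  rw [Real.dist_eq]
  nlinarith [abs_nonneg (a i - a₀)]

theorem exists_seq_mem_tendsto_of_infDist_tendsto_zero {α : Type*} [PseudoMetricSpace α]
    {S : ℕ → Set α} (hS : ∀ k, (S k).Nonempty) {z : α}
    (h : Tendsto (fun k => infDist z (S k)) atTop (𝓝 0)) :
    ∃ w : ℕ → α, (∀ k, w k ∈ S k) ∧ Tendsto w atTop (𝓝 z) := by
  have hclose : ∀ k : ℕ, ∃ w ∈ S k, dist z w < infDist z (S k) + 1 / (k + 1) := fun k =>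
    (infDist_lt_iff (hS k)).1 (lt_add_of_pos_right _ Nat.one_div_pos_of_nat)
  choose w hwS hw using hclose
  refine ⟨w, hwS, tendsto_iff_dist_tendsto_zero.2 <| squeeze_zero (fun k => dist_nonneg)
    (fun k => (dist_comm (w k) z).trans_le (hw k).le) ?_⟩
  simpa using h.add tendsto_one_div_add_atTop_nhds_zero_nat

theorem infDist_le_norm_of_add_mem {E : Type*} [SeminormedAddCommGroup E] {a u : E} {s : Set E}
    (h : a + u ∈ s) : infDist a s ≤ ‖u‖ := by
  simpa [dist_eq_norm] using infDist_le_dist_of_mem (x := a) h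

theorem exists_add_mem_norm_eq_infDist {E : Type*} [NormedAddCommGroup E] [ProperSpace E]
    {s : Set E} (hs : IsClosed s) (hne : s.Nonempty) (a : E) :
    ∃ u, a + u ∈ s ∧ ‖u‖ = infDist a s := by
  obtain ⟨d, hd, hdist⟩ := hs.exists_infDist_eq_dist hne a
  exact ⟨d - a, by simpa using hd, by rw [hdist, dist_eq_norm, norm_sub_rev]⟩

theorem EReal.lt_sub_of_coe_lt_of_add_lt {a : EReal} {c r d : ℝ} (hc : (c : EReal) < a)
    (hd : a + r < d) : r < d - c := by
  have : ((c + r : ℝ) : EReal) < d := (EReal.add_lt_add_right_coe hc r).trans hd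
  have : c + r < d := by exact_mod_cast this
  linarith

structure PenalizedFeas (X : Set (Rn n)) (Y : Set (Rn m)) (D : Set Q)
    (g : Rn n × Rn m → ℝ) (H : Rn n × Rn m → Q) (τ lam : ℝ) (x : Rn n) (y : Rn m) : Prop where
  mem_X : x ∈ X
  mem_Y : y ∈ Y
  mem_D : H (x, y) ∈ D
  lam_nonneg : 0 ≤ lam
  le : ∀ z ∈ Y, g (x, y) ≤ g (x, z) + lam * infDist (H (x, z)) D + τ

theorem PenalizedFeas.pFeas {X : Set (Rn n)} {Y : Set (Rn m)} {D : Set Q}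
    {g : Rn n × Rn m → ℝ} {H : Rn n × Rn m → Q} {τ lam : ℝ} {x : Rn n} {y : Rn m}
    (h : PenalizedFeas X Y D g H τ lam x y) : PFeas X Y D g H τ x y :=
  ⟨h.mem_X, h.mem_Y, h.mem_D, fun z hz hHz => by simpa [infDist_zero_of_mem hHz] using h.le z hz⟩

theorem pVal_le {Z : Type*} {X : Set (Rn n)} {Y : Set (Rn m)} {D : Set Z}
    {f : Rn n × Rn m → EReal} {g : Rn n × Rn m → ℝ} {H : Rn n × Rn m → Z} {τ : ℝ}
    {x : Rn n} {y : Rn m}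
    (h : PFeas X Y D g H τ x y) : PVal X Y D f g H τ ≤ f (x, y) :=
  iInf_le_of_le x <| iInf_le_of_le y <| iInf_le _ h

section ProblemNu

variable {X : Set (Rn n)} {Y : Set (Rn m)} {D : Set Q} {Yn : Set (Rn m)}
  {fn : Rn n × Rn m → EReal} {gn : Rn n × Rn m → ℝ} {Hn : Rn n × Rn m → Q}
  {σn θn lamBar τn : ℝ} {x : Rn n} {y : Rn m} {u : Q} {α lam : ℝ}

theorem pnuVal_le_pnuObj (h : PnuFeas X Y D Yn gn Hn lamBar τn x y u α lam) :
    PnuVal X Y D Yn fn gn Hn σn θn lamBar τn ≤ PnuObj fn σn θn x y u α :=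
  iInf_le_of_le x <| iInf_le_of_le y <| iInf_le_of_le u <| iInf_le_of_le α <|
    iInf_le_of_le lam <| iInf_le _ h

theorem PnuEps.pnuObj_eq_pnuVal
    (h : PnuEps X Y D Yn fn gn Hn σn θn lamBar τn 0 x y u α lam) :
    PnuObj fn σn θn x y u α = PnuVal X Y D Yn fn gn Hn σn θn lamBar τn :=
  le_antisymm (by simpa using h.2.2) (pnuVal_le_pnuObj h.1)

end ProblemNu

namespace BasicAssumption

variable {X : Set (Rn n)} {Y : Set (Rn m)} {D : Set Q} {Yν : ℕ → Set (Rn m)}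
  {f : Rn n × Rn m → EReal} {fν : ℕ → Rn n × Rn m → EReal}
  {g : Rn n × Rn m → ℝ} {gν : ℕ → Rn n × Rn m → ℝ}
  {H : Rn n × Rn m → Q} {Hν : ℕ → Rn n × Rn m → Q}
  {σ θ lamBar τν δ η : ℕ → ℝ} {τ : ℝ}

theorem δ_nonneg (ba : BasicAssumption X Y D Yν f fν g gν H Hν σ θ lamBar τν δ η) (ν : ℕ) :
    0 ≤ δ ν :=
  (abs_nonneg _).trans (ba.g_err ν _ ba.X_nonempty.some_mem _ ba.Y_nonempty.some_mem)

theorem η_nonneg (ba : BasicAssumption X Y D Yν f fν g gν H Hν σ θ lamBar τν δ η) (ν : ℕ) :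
    0 ≤ η ν :=
  (abs_nonneg _).trans (ba.H_err ν _ ba.X_nonempty.some_mem _ ba.Y_nonempty.some_mem)

theorem tendsto_θ_mul_η (ba : BasicAssumption X Y D Yν f fν g gν H Hν σ θ lamBar τν δ η) :
    Tendsto (fun ν => θ ν * η ν) atTop (𝓝 0) := by
  refine squeeze_zero' (Eventually.of_forall fun ν => mul_nonneg (ba.θ_nonneg ν)
    (ba.η_nonneg ν)) ?_ ba.θlamη_lim
  filter_upwards [ba.lamBar_top.eventually_ge_atTop 1] with ν hν
  nlinarith [mul_nonneg (ba.θ_nonneg ν) (ba.η_nonneg ν)]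

theorem infDist_H_le_of_pnuFeas
    (ba : BasicAssumption X Y D Yν f fν g gν H Hν σ θ lamBar τν δ η) {ν : ℕ} {x : Rn n}
    {y : Rn m} {u : Q} {α lam : ℝ}
    (h : PnuFeas X Y D (Yν ν) (gν ν) (Hν ν) (lamBar ν) (τν ν) x y u α lam) :
    infDist (H (x, y)) D ≤ ‖u‖ + η ν := by
  have := (abs_sub_le_iff.1 (ba.H_err ν x h.1 y h.2.1)).2
  linarith [infDist_le_norm_of_add_mem h.2.2.2.2.2.1]

theorem g_add_le_of_pnuFeas
    (ba : BasicAssumption X Y D Yν f fν g gν H Hν σ θ lamBar τν δ η) {ν : ℕ} {x : Rn n}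
    {y : Rn m} {u : Q} {α lam : ℝ}
    (h : PnuFeas X Y D (Yν ν) (gν ν) (Hν ν) (lamBar ν) (τν ν) x y u α lam)
    {z : Rn m} (hz : z ∈ Yν ν) :
    g (x, y) + α ≤ g (x, z) + lam * (infDist (H (x, z)) D + η ν) + τν ν + 2 * δ ν := by
  obtain ⟨hx, hy, -, hlam, -, -, hle⟩ := h
  have hzY := ba.Yν_subset ν hz
  have e1 := abs_sub_le_iff.1 (ba.g_err ν x hx y hy)
  have e2 := abs_sub_le_iff.1 (ba.g_err ν x hx z hzY)
  have e3 := abs_sub_le_iff.1 (ba.H_err ν x hx z hzY)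
  have := mul_le_mul_of_nonneg_left (by linarith [e3.1] : infDist (Hν ν (x, z)) D ≤
    infDist (H (x, z)) D + η ν) hlam
  linarith [hle z hz]

theorem penalizedFeas_of_tendsto
    (ba : BasicAssumption X Y D Yν f fν g gν H Hν σ θ lamBar τν δ η) {ρ : ℕ → ℕ}
    (hρ : Tendsto ρ atTop atTop) {x : ℕ → Rn n} {y : ℕ → Rn m} {u : ℕ → Q} {α lam : ℕ → ℝ}
    {xb : Rn n} {yb : Rn m} {lb : ℝ}
    (hfeas : ∀ k, PnuFeas X Y D (Yν (ρ k)) (gν (ρ k)) (Hν (ρ k)) (lamBar (ρ k)) (τν (ρ k))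
      (x k) (y k) (u k) (α k) (lam k))
    (hx : Tendsto x atTop (𝓝 xb)) (hy : Tendsto y atTop (𝓝 yb)) (hu : Tendsto u atTop (𝓝 0))
    (hα : Tendsto α atTop (𝓝 0)) (hlam : Tendsto lam atTop (𝓝 lb))
    (hτ : Tendsto τν atTop (𝓝 τ)) :
    PenalizedFeas X Y D g H τ lb xb yb := by
  have hxX k : x k ∈ X := (hfeas k).1
  have hyY k : y k ∈ Y := (hfeas k).2.1
  have hxb := ba.X_closed.mem_of_tendsto hx (Eventually.of_forall hxX)
  have hyb := ba.Y_closed.mem_of_tendsto hy (Eventually.of_forall hyY)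
  have hη := ba.η_lim.comp hρ
  have hdist {w : ℕ → Rn m} {wb : Rn m} (hwY : ∀ k, w k ∈ Y) (hwb : wb ∈ Y)
      (hw : Tendsto w atTop (𝓝 wb)) :
      Tendsto (fun k => infDist (H (x k, w k)) D) atTop (𝓝 (infDist (H (xb, wb)) D)) :=
    ((continuous_infDist_pt D).tendsto _).comp (ba.H_cont.tendsto_comp_prodMk hxX hwY hxb hwb hx hw)
  refine ⟨hxb, hyb, ?_, ge_of_tendsto' hlam fun k => (hfeas k).2.2.2.1, fun z hz => ?_⟩
  · have := le_of_tendsto_of_tendsto' (hdist hyY hyb hy) (hu.norm.add hη)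
      fun k => ba.infDist_H_le_of_pnuFeas (hfeas k)
    rw [norm_zero, zero_add] at this
    exact (ba.D_closed.mem_iff_infDist_zero ba.D_nonempty).2 (this.antisymm infDist_nonneg)
  · have hzYν : Tendsto (fun k => infDist z (Yν (ρ k))) atTop (𝓝 0) := by
      simpa [infDist_zero_of_mem hz, Function.comp_def] using (ba.Yν_conv z).comp hρ
    obtain ⟨w, hwYν, hw⟩ :=
      exists_seq_mem_tendsto_of_infDist_tendsto_zero (fun k => ba.Yν_nonempty (ρ k)) hzYν
    have hwY k : w k ∈ Y := ba.Yν_subset _ (hwYν k)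
    have hlhs := (ba.g_cont.tendsto_comp_prodMk hxX hyY hxb hyb hx hy).add hα
    have hrhs := ((((ba.g_cont.tendsto_comp_prodMk hxX hwY hxb hz hx hw).add
      (hlam.mul ((hdist hwY hz hw).add hη))).add (hτ.comp hρ)).add
      ((ba.δ_lim.comp hρ).const_mul 2))
    simpa using le_of_tendsto_of_tendsto' hlhs hrhs fun k =>
      ba.g_add_le_of_pnuFeas (hfeas k) (hwYν k)

theorem le_liminf_of_strictMono
    (ba : BasicAssumption X Y D Yν f fν g gν H Hν σ θ lamBar τν δ η) {ρ : ℕ → ℕ}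
    (hρ : StrictMono ρ) {x : ℕ → Rn n} {y : ℕ → Rn m} {xb : Rn n} {yb : Rn m}
    (hxX : ∀ k, x k ∈ X) (hyY : ∀ k, y k ∈ Y) (hxb : xb ∈ X) (hyb : yb ∈ Y)
    (hx : Tendsto x atTop (𝓝 xb)) (hy : Tendsto y atTop (𝓝 yb)) :
    f (xb, yb) ≤ liminf (fun k => fν (ρ k) (x k, y k)) atTop := by
  -- `f_liminf` speaks about full sequences: extend `x, y` off the range of `ρ` by `xb, yb`.
  set xe := Function.extend ρ x fun _ => xb
  set ye := Function.extend ρ y fun _ => yb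
  calc f (xb, yb) ≤ liminf (fun ν => fν ν (xe ν, ye ν)) atTop :=
        ba.f_liminf xb hxb yb hyb xe ye (Function.extend_apply_mem hxX fun _ => hxb)
          (Function.extend_apply_mem hyY fun _ => hyb) (tendsto_extend_of_strictMono hρ hx)
          (tendsto_extend_of_strictMono hρ hy)
    _ ≤ liminf ((fun ν => fν ν (xe ν, ye ν)) ∘ ρ) atTop := hρ.tendsto_atTop.liminf_le_liminf_comp
    _ = liminf (fun k => fν (ρ k) (x k, y k)) atTop := by
        simp only [Function.comp_def, xe, ye, hρ.injective.extend_apply]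

/-- The slack `α` absorbs the errors of `g^ν` and `H^ν` and the change of tolerance. -/
theorem pnuFeas_of_penalizedFeas
    (ba : BasicAssumption X Y D Yν f fν g gν H Hν σ θ lamBar τν δ η) {lb : ℝ} {xb : Rn n}
    {yb : Rn m} (h : PenalizedFeas X Y D g H τ lb xb yb) {ν : ℕ} (hν : lb ≤ lamBar ν) {u : Q}
    (hu : Hν ν (xb, yb) + u ∈ D) :
    PnuFeas X Y D (Yν ν) (gν ν) (Hν ν) (lamBar ν) (τν ν) xb yb u
      (-(2 * δ ν + lb * η ν + |τν ν - τ|)) lb := by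
  refine ⟨h.mem_X, h.mem_Y, ?_, h.lam_nonneg, hν, hu, fun z hz => ?_⟩
  · linarith [ba.δ_nonneg ν, mul_nonneg h.lam_nonneg (ba.η_nonneg ν), abs_nonneg (τν ν - τ)]
  have hzY := ba.Yν_subset ν hz
  have e1 := abs_sub_le_iff.1 (ba.g_err ν xb h.mem_X yb h.mem_Y)
  have e2 := abs_sub_le_iff.1 (ba.g_err ν xb h.mem_X z hzY)
  have e3 := abs_sub_le_iff.1 (ba.H_err ν xb h.mem_X z hzY)
  have := mul_le_mul_of_nonneg_left (by linarith [e3.2] : infDist (H (xb, z)) D ≤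
    infDist (Hν ν (xb, z)) D + η ν) h.lam_nonneg
  linarith [h.le z hzY, neg_abs_le (τν ν - τ)]

theorem pnuVal_le_of_penalizedFeas [ProperSpace Q]
    (ba : BasicAssumption X Y D Yν f fν g gν H Hν σ θ lamBar τν δ η) {lb : ℝ} {xb : Rn n}
    {yb : Rn m} (h : PenalizedFeas X Y D g H τ lb xb yb) {ν : ℕ} (hν : lb ≤ lamBar ν) :
    PnuVal X Y D (Yν ν) (fν ν) (gν ν) (Hν ν) (σ ν) (θ ν) (lamBar ν) (τν ν) ≤
      fν ν (xb, yb) + ((σ ν * η ν + θ ν * (2 * δ ν + lb * η ν + |τν ν - τ|) : ℝ) : EReal) := by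
  obtain ⟨u, hu, hnorm⟩ :=
    exists_add_mem_norm_eq_infDist ba.D_closed ba.D_nonempty (Hν ν (xb, yb))
  have hu_le : ‖u‖ ≤ η ν := by
    have := (abs_sub_le_iff.1 (ba.H_err ν xb h.mem_X yb h.mem_Y)).1
    rw [infDist_zero_of_mem h.mem_D] at this
    linarith
  refine (pnuVal_le_pnuObj (ba.pnuFeas_of_penalizedFeas h hν hu)).trans
    (add_le_add le_rfl (EReal.coe_le_coe_iff.2 ?_))
  nlinarith [ba.σ_nonneg ν]

theorem limsup_pnuVal_le [ProperSpace Q]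
    (ba : BasicAssumption X Y D Yν f fν g gν H Hν σ θ lamBar τν δ η) {lb : ℝ} {xb : Rn n}
    {yb : Rn m} (h : PenalizedFeas X Y D g H τ lb xb yb)
    (hrate : Tendsto (fun ν => θ ν * |τν ν - τ|) atTop (𝓝 0)) :
    limsup (fun ν => PnuVal X Y D (Yν ν) (fν ν) (gν ν) (Hν ν) (σ ν) (θ ν) (lamBar ν) (τν ν))
      atTop ≤ f (xb, yb) := by
  set err := fun ν => σ ν * η ν + θ ν * (2 * δ ν + lb * η ν + |τν ν - τ|)
  have herr : Tendsto (fun ν => (err ν : EReal)) atTop (𝓝 0) := by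
    have := ((ba.ση_lim.add (ba.θδ_lim.const_mul 2)).add
      (ba.tendsto_θ_mul_η.const_mul lb)).add hrate
    simpa using EReal.tendsto_coe.2 (this.congr fun ν => by ring)
  calc _ ≤ limsup (fun ν => fν ν (xb, yb) + (err ν : EReal)) atTop :=
        limsup_le_limsup <| (ba.lamBar_top.eventually_ge_atTop lb).mono fun ν hν =>
          ba.pnuVal_le_of_penalizedFeas h hν
    _ ≤ limsup (fun ν => fν ν (xb, yb)) atTop + limsup (fun ν => (err ν : EReal)) atTop :=
        EReal.limsup_add_le (.inr (by simp [herr.limsup_eq])) (.inr (by simp [herr.limsup_eq]))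
    _ ≤ f (xb, yb) := by
        rw [herr.limsup_eq, add_zero]
        exact ba.f_limsup xb h.mem_X yb h.mem_Y

theorem exists_penalizedFeas_le_liminf
    (ba : BasicAssumption X Y D Yν f fν g gν H Hν σ θ lamBar τν δ η)
    {B : Set (Rn n × Rn m × Q × ℝ × ℝ)} (hB : IsCompact B)
    (hopt : ∀ ν, ∃ (x : Rn n) (y : Rn m) (u : Q) (α lam : ℝ),
      (x, y, u, α, lam) ∈ B ∧
      PnuEps X Y D (Yν ν) (fν ν) (gν ν) (Hν ν) (σ ν) (θ ν) (lamBar ν) (τν ν) 0 x y u α lam)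
    (hσ : Tendsto σ atTop atTop) (hθ : Tendsto θ atTop atTop) (hτ : Tendsto τν atTop (𝓝 τ))
    (hL : liminf (fun ν =>
      PnuVal X Y D (Yν ν) (fν ν) (gν ν) (Hν ν) (σ ν) (θ ν) (lamBar ν) (τν ν)) atTop ≠ ⊤) :
    ∃ (lb : ℝ) (xb : Rn n) (yb : Rn m), PenalizedFeas X Y D g H τ lb xb yb ∧
      f (xb, yb) ≤ liminf (fun ν =>
        PnuVal X Y D (Yν ν) (fν ν) (gν ν) (Hν ν) (σ ν) (θ ν) (lamBar ν) (τν ν)) atTop := by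
  set M := fun ν => PnuVal X Y D (Yν ν) (fν ν) (gν ν) (Hν ν) (σ ν) (θ ν) (lamBar ν) (τν ν)
  choose x y u α lam hxB hxopt using hopt
  have hM ν : M ν = fν ν (x ν, y ν) + ((σ ν * ‖u ν‖ - θ ν * α ν : ℝ) : EReal) :=
    (hxopt ν).pnuObj_eq_pnuVal.symm
  have hfeas ν := (hxopt ν).1
  have hpen_nonneg ν : 0 ≤ σ ν * ‖u ν‖ - θ ν * α ν := by
    nlinarith [mul_nonneg (ba.σ_nonneg ν) (norm_nonneg (u ν)), ba.θ_nonneg ν, (hfeas ν).2.2.1]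
  obtain ⟨φ, hφ, hMφ⟩ := (isLeast_mapClusterPt_liminf (u := M) (f := atTop)).1.tendsto_subseq
  obtain ⟨⟨xb, yb, ub, αb, lb⟩, -, ψ, hψ, hlim⟩ := hB.tendsto_subseq fun k => hxB (φ k)
  set ρ := φ ∘ ψ
  have hρ : StrictMono ρ := hφ.comp hψ
  have hx : Tendsto (x ∘ ρ) atTop (𝓝 xb) := hlim.fst_nhds
  have hy : Tendsto (y ∘ ρ) atTop (𝓝 yb) := hlim.snd_nhds.fst_nhds
  have hu : Tendsto (u ∘ ρ) atTop (𝓝 ub) := hlim.snd_nhds.snd_nhds.fst_nhds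
  have hα : Tendsto (α ∘ ρ) atTop (𝓝 αb) := hlim.snd_nhds.snd_nhds.snd_nhds.fst_nhds
  have hlam : Tendsto (lam ∘ ρ) atTop (𝓝 lb) := hlim.snd_nhds.snd_nhds.snd_nhds.snd_nhds
  have hxX k : x (ρ k) ∈ X := (hfeas (ρ k)).1
  have hyY k : y (ρ k) ∈ Y := (hfeas (ρ k)).2.1
  have hf := ba.le_liminf_of_strictMono hρ hxX hyY
    (ba.X_closed.mem_of_tendsto hx (Eventually.of_forall hxX))
    (ba.Y_closed.mem_of_tendsto hy (Eventually.of_forall hyY)) hx hy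
  have hMρ : Tendsto (M ∘ ρ) atTop (𝓝 (liminf M atTop)) := hMφ.comp hψ.tendsto_atTop
  have hfL : f (xb, yb) ≤ liminf M atTop := by
    refine hf.trans <| (liminf_le_liminf <| Eventually.of_forall fun k => ?_).trans_eq
      hMρ.liminf_eq
    rw [Function.comp_apply, hM]
    exact le_add_of_nonneg_right (EReal.coe_nonneg.2 (hpen_nonneg _))
  obtain ⟨c, -, hc⟩ := EReal.lt_iff_exists_real_btwn.1 (bot_lt_iff_ne_bot.2 (ba.f_ne_bot (xb, yb)))
  obtain ⟨d, hLd, -⟩ := EReal.lt_iff_exists_real_btwn.1 (lt_top_iff_ne_top.2 hL)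
  have hbound : ∀ᶠ k in atTop, σ (ρ k) * ‖u (ρ k)‖ - θ (ρ k) * α (ρ k) ≤ d - c := by
    filter_upwards [eventually_lt_of_lt_liminf (hc.trans_le hf),
      hMρ.eventually (gt_mem_nhds hLd)] with k hck hdk
    rw [Function.comp_apply, hM] at hdk
    exact (EReal.lt_sub_of_coe_lt_of_add_lt hck hdk).le
  obtain ⟨rfl, rfl⟩ := eq_zero_of_tendsto_of_eventually_penalty_le (hσ.comp hρ.tendsto_atTop)
    (hθ.comp hρ.tendsto_atTop) (fun k => ba.σ_nonneg _) (fun k => ba.θ_nonneg _)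
    (fun k => (hfeas (ρ k)).2.2.1) hu hα hbound
  exact ⟨lb, xb, yb, ba.penalizedFeas_of_tendsto hρ.tendsto_atTop (fun k => hfeas (ρ k))
    hx hy hu hα hlam hτ, hfL⟩

end BasicAssumption

theorem Pnu_liminf_ge_PVal_general
    [NormedSpace ℝ Q] [FiniteDimensional ℝ Q]
    (X : Set (Rn n)) (Y : Set (Rn m)) (D : Set Q) (Yν : ℕ → Set (Rn m))
    (f : Rn n × Rn m → EReal) (fν : ℕ → Rn n × Rn m → EReal)
    (g : Rn n × Rn m → ℝ) (gν : ℕ → Rn n × Rn m → ℝ)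
    (H : Rn n × Rn m → Q) (Hν : ℕ → Rn n × Rn m → Q)
    (σ θ lamBar τν δ η : ℕ → ℝ) (τ : ℝ)
    (ba : BasicAssumption X Y D Yν f fν g gν H Hν σ θ lamBar τν δ η)
    (B : Set (Rn n × Rn m × Q × ℝ × ℝ)) (hB : IsCompact B)
    (hopt : ∀ ν, ∃ (x : Rn n) (y : Rn m) (u : Q) (α lam : ℝ),
      (x, y, u, α, lam) ∈ B ∧
      PnuEps X Y D (Yν ν) (fν ν) (gν ν) (Hν ν) (σ ν) (θ ν) (lamBar ν) (τν ν) 0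
        x y u α lam)
    (hrate : Tendsto (fun ν => θ ν * |τν ν - τ|) atTop (𝓝 0))
    (hσ : Tendsto σ atTop atTop) (hθ : Tendsto θ atTop atTop) :
    PVal X Y D f g H τ ≤
      liminf (fun ν =>
        PnuVal X Y D (Yν ν) (fν ν) (gν ν) (Hν ν) (σ ν) (θ ν) (lamBar ν) (τν ν)) atTop ∧
    ((liminf (fun ν =>
        PnuVal X Y D (Yν ν) (fν ν) (gν ν) (Hν ν) (σ ν) (θ ν) (lamBar ν) (τν ν)) atTop ≠ ⊥ ∧
      liminf (fun ν =>
        PnuVal X Y D (Yν ν) (fν ν) (gν ν) (Hν ν) (σ ν) (θ ν) (lamBar ν) (τν ν)) atTop ≠ ⊤) →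
      ∃ c : ℝ, Tendsto (fun ν =>
        PnuVal X Y D (Yν ν) (fν ν) (gν ν) (Hν ν) (σ ν) (θ ν) (lamBar ν) (τν ν)) atTop
        (𝓝 (c : EReal))) := by
  set M := fun ν => PnuVal X Y D (Yν ν) (fν ν) (gν ν) (Hν ν) (σ ν) (θ ν) (lamBar ν) (τν ν)
  rcases eq_or_ne (liminf M atTop) ⊤ with hL | hL
  · exact ⟨hL ▸ le_top, fun hfin => absurd hL hfin.2⟩
  obtain ⟨lb, xb, yb, hpen, hfL⟩ := ba.exists_penalizedFeas_le_liminf hB hopt hσ hθ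
    (tendsto_of_mul_abs_sub_tendsto_zero hθ hrate) hL
  refine ⟨(pVal_le hpen.pFeas).trans hfL, fun hfin => ⟨(liminf M atTop).toReal, ?_⟩⟩
  rw [EReal.coe_toReal hfin.2 hfin.1]
  exact tendsto_of_le_liminf_of_limsup_le le_rfl ((ba.limsup_pnuVal_le hpen hrate).trans hfL)

/-- Theorem 2.2(b): lower bound on the limit of minimum values of (P)^ν. -/
theorem Pnu_liminf_ge_PVal
    [NormedSpace ℝ Q] [FiniteDimensional ℝ Q]
    (X : Set (Rn n)) (Y : Set (Rn m)) (D : Set Q) (Yν : ℕ → Set (Rn m))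
    (f : Rn n × Rn m → EReal) (fν : ℕ → Rn n × Rn m → EReal)
    (g : Rn n × Rn m → ℝ) (gν : ℕ → Rn n × Rn m → ℝ)
    (H : Rn n × Rn m → Q) (Hν : ℕ → Rn n × Rn m → Q)
    (σ θ lamBar τν δ η : ℕ → ℝ) (τ : ℝ) (hτ : 0 ≤ τ)
    (ba : BasicAssumption X Y D Yν f fν g gν H Hν σ θ lamBar τν δ η)
    (B : Set (Rn n × Rn m × Q × ℝ × ℝ)) (hB : IsCompact B)
    (hopt : ∀ ν, ∃ (x : Rn n) (y : Rn m) (u : Q) (α lam : ℝ),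
      (x, y, u, α, lam) ∈ B ∧
      PnuEps X Y D (Yν ν) (fν ν) (gν ν) (Hν ν) (σ ν) (θ ν) (lamBar ν) (τν ν) 0
        x y u α lam)
    (hrate : Tendsto (fun ν => θ ν * |τν ν - τ|) atTop (𝓝 0))
    (hσ : Tendsto σ atTop atTop) (hθ : Tendsto θ atTop atTop) :
    PVal X Y D f g H τ ≤
      liminf (fun ν =>
        PnuVal X Y D (Yν ν) (fν ν) (gν ν) (Hν ν) (σ ν) (θ ν) (lamBar ν) (τν ν)) atTop ∧
    ((liminf (fun ν =>
        PnuVal X Y D (Yν ν) (fν ν) (gν ν) (Hν ν) (σ ν) (θ ν) (lamBar ν) (τν ν)) atTop ≠ ⊥ ∧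
      liminf (fun ν =>
        PnuVal X Y D (Yν ν) (fν ν) (gν ν) (Hν ν) (σ ν) (θ ν) (lamBar ν) (τν ν)) atTop ≠ ⊤) →
      ∃ c : ℝ, Tendsto (fun ν =>
        PnuVal X Y D (Yν ν) (fν ν) (gν ν) (Hν ν) (σ ν) (θ ν) (lamBar ν) (τν ν)) atTop
        (𝓝 (c : EReal))) :=
  Pnu_liminf_ge_PVal_general X Y D Yν f fν g gν H Hν σ θ lamBar τν δ η τ ba B hB hopt hrate hσ hθ
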